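/- Let n ≥ 3 and (n−2)/2 < β < n(n−2)/4, and set c_β = n(n−2) − 4β. Then the set of functions w ∈ C²(ℝ) with w(t) > 0 for all t ∈ ℝ satisfying w''(t) − ((n−2)/2)² w(t) + w(t)^{(n+2)/(n−2)} + c_β (e^{−2t}/(1+e^{−2t})²) w(t) = 0 for all t ∈ ℝ is infinite. -/

import Mathlib

/-!
Write the equation as the system `u' = v`, `v' = a(t) u - u ^ p` with `p = (n + 2) / (n - 2)`,
`a(t) = ((n - 2) / 2) ^ 2 - c_β q(t)` and `q(t) = e^{-2t} / (1 + e^{-2t}) ^ 2`. Since `q` peaks at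
`t = 0`, the energy `v ^ 2 / 2 - a(t) u ^ 2 / 2 + u ^ (p + 1) / (p + 1)`, whose derivative is
`-a'(t) u ^ 2 / 2`, is largest at `t = 0`. The bound `β > (n - 2) / 2` gives `a(0) > 0`, so for every
small `d > 0` the orbit through `(d, 0)` starts with negative energy and keeps it: `u` never reaches
`0`, where the energy is `≥ 0`, and `(u, v)` stays bounded. Truncating the system outside that bounded
region makes it globally Lipschitz, so these orbits exist for all time, and distinct `d` give distinct
solutions.
-/

open Set Real Filter Topology intervalIntegral

noncomputable section

section GlobalExistence

variable {E : Type*} [NormedAddCommGroup E] [NormedSpace ℝ E] [CompleteSpace E]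
  {F : ℝ → E → E} {K : NNReal} {C : ℝ}

theorem exists_forall_mem_Ioo_hasDerivAt_of_lipschitzWith_of_norm_le
    (hL : ∀ t, LipschitzWith K (F t)) (hF : ∀ t x, ‖F t x‖ ≤ C)
    (hc : ∀ x, Continuous (F · x)) (x₀ : E) (T : NNReal) :
    ∃ x : ℝ → E, x 0 = x₀ ∧ ∀ t ∈ Ioo (-(T : ℝ)) T, HasDerivAt x (F t (x t)) t := by
  have hpl : IsPicardLindelof F (tmin := -(T : ℝ)) (tmax := T)
      ⟨0, by simp⟩ x₀ (C.toNNReal * T) 0 C.toNNReal K :=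
    { lipschitzOnWith := fun t _ => (hL t).lipschitzOnWith
      continuousOn := fun x _ => (hc x).continuousOn
      norm_le := fun t _ x _ => (hF t x).trans (le_coe_toNNReal C)
      mul_max_le := by simp }
  obtain ⟨x, hx0, hx⟩ := hpl.exists_eq_forall_mem_Icc_hasDerivWithinAt₀
  exact ⟨x, hx0, fun t ht => (hx t (Ioo_subset_Icc_self ht)).hasDerivAt (Icc_mem_nhds ht.1 ht.2)⟩

theorem exists_forall_hasDerivAt_of_lipschitzWith_of_norm_le
    (hL : ∀ t, LipschitzWith K (F t)) (hF : ∀ t x, ‖F t x‖ ≤ C)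
    (hc : ∀ x, Continuous (F · x)) (x₀ : E) :
    ∃ x : ℝ → E, x 0 = x₀ ∧ ∀ t, HasDerivAt x (F t (x t)) t := by
  choose y hy0 hy using exists_forall_mem_Ioo_hasDerivAt_of_lipschitzWith_of_norm_le hL hF hc x₀
  have hagree : ∀ (T T' : NNReal) (t : ℝ), |t| < min (T : ℝ) T' → y T t = y T' t := by
    intro T T' t ht
    have hsub : ∀ S : NNReal, min (T : ℝ) T' ≤ S →
        Ioo (-min (T : ℝ) T') (min (T : ℝ) T') ⊆ Ioo (-(S : ℝ)) S :=
      fun S hS => Ioo_subset_Ioo (by linarith) hS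
    have h0 : (0 : ℝ) ∈ Ioo (-min (T : ℝ) T') (min (T : ℝ) T') := by
      constructor <;> linarith [abs_nonneg t]
    exact ODE_solution_unique_of_mem_Ioo (s := fun _ => univ)
      (fun t _ => (hL t).lipschitzOnWith) h0
      (fun s hs => ⟨hy T s (hsub T (min_le_left _ _) hs), mem_univ _⟩)
      (fun s hs => ⟨hy T' s (hsub T' (min_le_right _ _) hs), mem_univ _⟩)
      (by rw [hy0, hy0]) (abs_lt.mp ht)
  refine ⟨fun t => y (‖t‖₊ + 1) t, hy0 _, fun t => ?_⟩
  have ht : t ∈ Ioo (-((‖t‖₊ + 1 : NNReal) : ℝ)) (‖t‖₊ + 1 : NNReal) := by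
    rw [mem_Ioo, ← abs_lt]; simp
  refine (hy _ t ht).congr_of_eventuallyEq (eventually_of_mem (Ioo_mem_nhds ht.1 ht.2) ?_)
  intro s hs
  refine hagree _ _ s (lt_min ?_ (abs_lt.mpr hs))
  simp

end GlobalExistence

lemma monotoneOn_of_hasDerivAt_nonneg {f f' : ℝ → ℝ} {D : Set ℝ} (hD : Convex ℝ D)
    (hf : ∀ x, HasDerivAt f (f' x) x) (hf' : ∀ x ∈ D, 0 ≤ f' x) : MonotoneOn f D :=
  monotoneOn_of_hasDerivWithinAt_nonneg hD (fun x _ => (hf x).continuousAt.continuousWithinAt)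
    (fun x _ => (hf x).hasDerivWithinAt) (fun x hx => hf' x (interior_subset hx))

lemma antitoneOn_of_hasDerivAt_nonpos {f f' : ℝ → ℝ} {D : Set ℝ} (hD : Convex ℝ D)
    (hf : ∀ x, HasDerivAt f (f' x) x) (hf' : ∀ x ∈ D, f' x ≤ 0) : AntitoneOn f D :=
  antitoneOn_of_hasDerivWithinAt_nonpos hD (fun x _ => (hf x).continuousAt.continuousWithinAt)
    (fun x _ => (hf x).hasDerivWithinAt) (fun x hx => hf' x (interior_subset hx))

lemma hasDerivAt_integral_of_continuous {g : ℝ → ℝ} (hg : Continuous g) (y : ℝ) :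
    HasDerivAt (fun y => ∫ s in (0 : ℝ)..y, g s) (g y) y :=
  (hg.integral_hasStrictDerivAt 0 y).hasDerivAt

lemma integral_eq_zero_of_nonpos {g : ℝ → ℝ} (hg : ∀ s ≤ 0, g s = 0) {y : ℝ} (hy : y ≤ 0) :
    ∫ s in (0 : ℝ)..y, g s = 0 := by
  rw [integral_congr (g := fun _ => 0) fun s hs => hg s ?_, integral_zero]
  rw [uIcc_of_ge hy] at hs
  exact hs.2

def clip (lo hi x : ℝ) : ℝ := max lo (min x hi)

section Clip

variable {lo hi x : ℝ}

lemma clip_of_mem (hx : x ∈ Icc lo hi) : clip lo hi x = x := by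
  simp [clip, hx.1, hx.2]

lemma clip_mem (h : lo ≤ hi) (x : ℝ) : clip lo hi x ∈ Icc lo hi :=
  ⟨le_max_left _ _, max_le h (min_le_right _ _)⟩

lemma clip_of_le (hx : x ≤ lo) : clip lo hi x = lo := by
  simp [clip, hx]

lemma clip_of_ge (h : lo ≤ hi) (hx : hi ≤ x) : clip lo hi x = hi := by
  simp [clip, h, hx]

lemma monotone_clip : Monotone (clip lo hi) :=
  fun _ _ h => max_le_max le_rfl (min_le_min_right _ h)

lemma lipschitzWith_clip : LipschitzWith 1 (clip lo hi) :=
  (LipschitzWith.id.min_const hi).const_max lo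

lemma continuous_clip : Continuous (clip lo hi) :=
  lipschitzWith_clip.continuous

variable (hlo : lo ≤ 0) (hhi : 0 ≤ hi)
include hlo hhi

lemma integral_clip_of_mem {y : ℝ} (hy : y ∈ Icc lo hi) :
    ∫ s in (0 : ℝ)..y, clip lo hi s = y ^ 2 / 2 := by
  have hsub : uIcc 0 y ⊆ Icc lo hi := uIcc_subset_Icc ⟨hlo, hhi⟩ hy
  rw [integral_congr fun s hs => clip_of_mem (hsub hs), integral_id]
  ring

lemma monotoneOn_integral_clip : MonotoneOn (fun y => ∫ s in (0 : ℝ)..y, clip lo hi s) (Ici 0) :=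
  monotoneOn_of_hasDerivAt_nonneg (convex_Ici 0) (hasDerivAt_integral_of_continuous continuous_clip)
    fun _ hs => clip_of_mem ⟨hlo, hhi⟩ ▸ monotone_clip hs

lemma antitoneOn_integral_clip : AntitoneOn (fun y => ∫ s in (0 : ℝ)..y, clip lo hi s) (Iic 0) :=
  antitoneOn_of_hasDerivAt_nonpos (convex_Iic 0) (hasDerivAt_integral_of_continuous continuous_clip)
    fun _ hs => clip_of_mem ⟨hlo, hhi⟩ ▸ monotone_clip hs

lemma integral_clip_nonneg (y : ℝ) : 0 ≤ ∫ s in (0 : ℝ)..y, clip lo hi s := by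
  rcases le_total 0 y with hy | hy
  · simpa using monotoneOn_integral_clip hlo hhi self_mem_Ici hy hy
  · simpa using antitoneOn_integral_clip hlo hhi hy self_mem_Iic hy

end Clip

lemma sq_div_two_le_integral_clip {V v : ℝ} (hV : 0 ≤ V) (hv : V ≤ |v|) :
    V ^ 2 / 2 ≤ ∫ s in (0 : ℝ)..v, clip (-V) V s := by
  have hV' : -V ≤ 0 := neg_nonpos.mpr hV
  rcases le_total 0 v with h | h
  · rw [abs_of_nonneg h] at hv
    rw [← integral_clip_of_mem hV' hV ⟨by linarith, le_rfl⟩]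
    exact monotoneOn_integral_clip hV' hV (mem_Ici.mpr hV) (mem_Ici.mpr h) hv
  · rw [abs_of_nonpos h] at hv
    rw [show V ^ 2 / 2 = (-V) ^ 2 / 2 by ring, ← integral_clip_of_mem hV' hV ⟨le_rfl, hV'.trans hV⟩]
    exact antitoneOn_integral_clip hV' hV (mem_Iic.mpr h) (mem_Iic.mpr hV') (by linarith)

section ClipRpow

variable {p R : ℝ}

lemma continuous_clip_rpow (hp : 0 ≤ p) : Continuous fun s => clip 0 R s ^ p :=
  continuous_clip.rpow_const fun _ => Or.inr hp

lemma integral_clip_rpow_of_mem (hp : 0 < p) {y : ℝ} (hy : y ∈ Icc 0 R) :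
    ∫ s in (0 : ℝ)..y, clip 0 R s ^ p = y ^ (p + 1) / (p + 1) := by
  have hsub : uIcc 0 y ⊆ Icc 0 R := uIcc_subset_Icc ⟨le_rfl, hy.1.trans hy.2⟩ hy
  rw [integral_congr fun s hs => by rw [clip_of_mem (hsub hs)],
    integral_rpow (Or.inl (by linarith)), zero_rpow (by linarith)]
  ring

lemma mul_integral_clip_le_integral_clip_rpow (hp : 1 < p) {A : ℝ} (hA : 0 ≤ A) (hR : 0 < R)
    (hRA : (p + 1) * A / 2 ≤ R ^ (p - 1)) {u : ℝ} (hu : R ≤ u) :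
    A * ∫ s in (0 : ℝ)..u, clip 0 R s ≤ ∫ s in (0 : ℝ)..u, clip 0 R s ^ p := by
  set G := fun y => (∫ s in (0 : ℝ)..y, clip 0 R s ^ p) - A * ∫ s in (0 : ℝ)..y, clip 0 R s
  have hRp : R ^ p = R ^ (p - 1) * R := by rw [rpow_sub_one hR.ne', div_mul_cancel₀ _ hR.ne']
  have hRp1 : R ^ (p + 1) = R ^ (p - 1) * R ^ 2 := by rw [rpow_add_one hR.ne', hRp]; ring
  have hG : ∀ y, HasDerivAt G (clip 0 R y ^ p - A * clip 0 R y) y := fun y =>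
    (hasDerivAt_integral_of_continuous (continuous_clip_rpow (by linarith)) y).sub
      ((hasDerivAt_integral_of_continuous continuous_clip y).const_mul A)
  have hmono : MonotoneOn G (Ici R) := monotoneOn_of_hasDerivAt_nonneg (convex_Ici R) hG
    fun y hy => by
      have hAR : A ≤ R ^ (p - 1) := by nlinarith
      rw [clip_of_ge hR.le hy, hRp]
      nlinarith [mul_le_mul_of_nonneg_right hAR hR.le]
  have hGR : 0 ≤ G R := by
    simp only [G, integral_clip_of_mem le_rfl hR.le ⟨hR.le, le_rfl⟩,
      integral_clip_rpow_of_mem (by linarith : 0 < p) ⟨hR.le, le_rfl⟩, hRp1]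
    rw [sub_nonneg, le_div_iff₀ (by linarith)]
    nlinarith [sq_nonneg R]
  linarith [hmono self_mem_Ici (mem_Ici.mpr hu) hu]

end ClipRpow

def truncField (a : ℝ → ℝ) (p R V t : ℝ) (x : ℝ × ℝ) : ℝ × ℝ :=
  (clip (-V) V x.2, a t * clip 0 R x.1 - clip 0 R x.1 ^ p)

def truncEnergy (a : ℝ → ℝ) (p R V t : ℝ) (x : ℝ × ℝ) : ℝ :=
  (∫ s in (0 : ℝ)..x.2, clip (-V) V s) - a t * (∫ s in (0 : ℝ)..x.1, clip 0 R s)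
    + ∫ s in (0 : ℝ)..x.1, clip 0 R s ^ p

section TruncatedSystem

variable {a a' : ℝ → ℝ} {A p R V : ℝ}

lemma lipschitzOnWith_mul_sub_rpow (hp : 1 ≤ p) {b : ℝ} (hb : |b| ≤ A) :
    LipschitzOnWith (A + p * R ^ (p - 1)).toNNReal (fun y => b * y - y ^ p) (Icc 0 R) := by
  refine (convex_Icc 0 R).lipschitzOnWith_of_nnnorm_hasDerivWithin_le
    (f' := fun y => b - p * y ^ (p - 1)) (fun y _ => ?_) fun y hy => ?_
  · have h := ((hasDerivAt_id y).const_mul b).sub (hasDerivAt_rpow_const (Or.inr hp))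
    exact (h.congr_deriv (by ring)).hasDerivWithinAt
  · have hy' : y ^ (p - 1) ≤ R ^ (p - 1) := rpow_le_rpow hy.1 hy.2 (by linarith)
    have hy0 : 0 ≤ y ^ (p - 1) := rpow_nonneg hy.1 _
    have hpy : 0 ≤ p * y ^ (p - 1) := mul_nonneg (by linarith) hy0
    have hpR : p * y ^ (p - 1) ≤ p * R ^ (p - 1) := by nlinarith
    rw [← NNReal.coe_le_coe, coe_nnnorm, Real.norm_eq_abs,
      Real.coe_toNNReal _ ((abs_nonneg b).trans (by linarith))]
    calc |b - p * y ^ (p - 1)| ≤ |b| + |p * y ^ (p - 1)| := abs_sub _ _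
      _ ≤ A + p * R ^ (p - 1) := by rw [abs_of_nonneg hpy]; linarith

lemma lipschitzWith_truncField (hp : 1 ≤ p) (hR : 0 ≤ R) (hA : ∀ t, |a t| ≤ A) (t : ℝ) :
    LipschitzWith (max 1 (A + p * R ^ (p - 1)).toNNReal) (truncField a p R V t) := by
  have hclip : LipschitzOnWith 1 (clip 0 R) univ := lipschitzWith_clip.lipschitzOnWith
  have hsnd := (lipschitzOnWith_univ.mp ((lipschitzOnWith_mul_sub_rpow hp (hA t)).comp
    hclip fun y _ => clip_mem hR y)).comp (LipschitzWith.prod_fst (β := ℝ))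
  exact ((lipschitzWith_clip.comp LipschitzWith.prod_snd).prodMk hsnd).weaken (by simp)

lemma norm_truncField_le (hp : 0 ≤ p) (hR : 0 ≤ R) (hV : 0 ≤ V) (hA : ∀ t, |a t| ≤ A)
    (t : ℝ) (x : ℝ × ℝ) : ‖truncField a p R V t x‖ ≤ max V (A * R + R ^ p) := by
  obtain ⟨hu0, huR⟩ := clip_mem hR x.1
  obtain ⟨hv1, hv2⟩ := clip_mem (neg_le_self hV) x.2
  have hup : clip 0 R x.1 ^ p ≤ R ^ p := rpow_le_rpow hu0 huR hp
  have hup0 : 0 ≤ clip 0 R x.1 ^ p := rpow_nonneg hu0 p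
  rw [Prod.norm_def]
  refine max_le_max (abs_le.mpr ⟨hv1, hv2⟩) ?_
  calc |a t * clip 0 R x.1 - clip 0 R x.1 ^ p|
        ≤ |a t * clip 0 R x.1| + |clip 0 R x.1 ^ p| := abs_sub _ _
    _ = |a t| * clip 0 R x.1 + clip 0 R x.1 ^ p := by
        rw [abs_mul, abs_of_nonneg hu0, abs_of_nonneg hup0]
    _ ≤ A * R + R ^ p :=
      add_le_add (mul_le_mul (hA t) huR hu0 ((abs_nonneg _).trans (hA t))) hup

lemma continuous_truncField_apply (ha : Continuous a) (x : ℝ × ℝ) :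
    Continuous fun t => truncField a p R V t x :=
  continuous_const.prodMk ((ha.mul continuous_const).sub continuous_const)

lemma hasDerivAt_truncEnergy (hp : 0 ≤ p) {x : ℝ → ℝ × ℝ} {t : ℝ} (ha : HasDerivAt a (a' t) t)
    (hx : HasDerivAt x (truncField a p R V t (x t)) t) :
    HasDerivAt (fun t => truncEnergy a p R V t (x t))
      (-(a' t * ∫ s in (0 : ℝ)..(x t).1, clip 0 R s)) t := by
  have hu := (hasFDerivAt_fst (𝕜 := ℝ)).comp_hasDerivAt t hx
  have hv := (hasFDerivAt_snd (𝕜 := ℝ)).comp_hasDerivAt t hx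
  have hK := (hasDerivAt_integral_of_continuous (continuous_clip (lo := -V) (hi := V)) _).comp t hv
  have hΦ := (hasDerivAt_integral_of_continuous (continuous_clip (lo := 0) (hi := R)) _).comp t hu
  have hΨ := (hasDerivAt_integral_of_continuous (continuous_clip_rpow (R := R) hp) _).comp t hu
  refine ((hK.fun_sub (ha.fun_mul hΦ)).fun_add hΨ).congr_deriv ?_
  simp only [Function.comp_apply, truncField, ContinuousLinearMap.coe_fst',
    ContinuousLinearMap.coe_snd']
  ring

lemma truncEnergy_le_truncEnergy_zero (hp : 0 ≤ p) (hR : 0 ≤ R) {x : ℝ → ℝ × ℝ}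
    (ha : ∀ t, HasDerivAt a (a' t) t) (ha'_nonpos : ∀ t ≤ 0, a' t ≤ 0)
    (ha'_nonneg : ∀ t, 0 ≤ t → 0 ≤ a' t) (hx : ∀ t, HasDerivAt x (truncField a p R V t (x t)) t)
    (t : ℝ) : truncEnergy a p R V t (x t) ≤ truncEnergy a p R V 0 (x 0) := by
  have hE t := hasDerivAt_truncEnergy hp (ha t) (hx t)
  have hΦ t := integral_clip_nonneg le_rfl hR (x t).1
  rcases le_total t 0 with ht | ht
  · exact monotoneOn_of_hasDerivAt_nonneg (convex_Iic 0) hE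
      (fun s hs => by nlinarith [ha'_nonpos s hs, hΦ s]) ht self_mem_Iic ht
  · exact antitoneOn_of_hasDerivAt_nonpos (convex_Ici 0) hE
      (fun s hs => by nlinarith [ha'_nonneg s hs, hΦ s]) self_mem_Ici ht ht

lemma mem_of_truncEnergy_neg (hp : 1 < p) (hR : 0 < R) (hV : 0 ≤ V) {t : ℝ} (hA : |a t| ≤ A)
    (hRA : (p + 1) * A / 2 ≤ R ^ (p - 1)) (hAV : A * R ^ 2 ≤ V ^ 2) {x : ℝ × ℝ}
    (hE : truncEnergy a p R V t x < 0) : x.1 ∈ Ioc 0 R ∧ x.2 ∈ Icc (-V) V := by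
  have hK := integral_clip_nonneg (neg_nonpos.mpr hV) hV x.2
  have hΦ := integral_clip_nonneg le_rfl hR.le x.1
  have hA0 : 0 ≤ A := (abs_nonneg _).trans hA
  have haΦ := mul_le_mul_of_nonneg_right (le_of_abs_le hA) hΦ
  unfold truncEnergy at hE
  have hu0 : 0 < x.1 := by
    by_contra! hu
    rw [integral_eq_zero_of_nonpos (fun s hs => clip_of_le hs) hu,
      integral_eq_zero_of_nonpos (fun s hs => by rw [clip_of_le hs, zero_rpow (by linarith)]) hu]
      at hE
    linarith
  have huR : x.1 ≤ R := by
    by_contra! hu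
    linarith [mul_integral_clip_le_integral_clip_rpow hp hA0 hR hRA hu.le]
  refine ⟨⟨hu0, huR⟩, ?_⟩
  rw [integral_clip_of_mem le_rfl hR.le ⟨hu0.le, huR⟩,
    integral_clip_rpow_of_mem (by linarith) ⟨hu0.le, huR⟩] at hE
  have hΨ : 0 ≤ x.1 ^ (p + 1) / (p + 1) := by have := rpow_nonneg hu0.le (p + 1); positivity
  have hu2 : x.1 ^ 2 ≤ R ^ 2 := pow_le_pow_left₀ hu0.le huR 2
  rw [mem_Icc, ← abs_le]
  by_contra! hv
  nlinarith [sq_div_two_le_integral_clip hV hv.le, mul_le_mul_of_nonneg_right (le_of_abs_le hA)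
    (sq_nonneg x.1), mul_le_mul_of_nonneg_left hu2 hA0]

end TruncatedSystem

section PositiveSolutions

variable {a a' : ℝ → ℝ} {A p : ℝ}

theorem exists_pos_solution (hp : 1 < p) (ha : ∀ t, HasDerivAt a (a' t) t)
    (ha'_nonpos : ∀ t ≤ 0, a' t ≤ 0) (ha'_nonneg : ∀ t, 0 ≤ t → 0 ≤ a' t)
    (hA : ∀ t, |a t| ≤ A) {d : ℝ} (hd : 0 < d)
    (hE : d ^ (p + 1) / (p + 1) < a 0 * d ^ 2 / 2) :
    ∃ u v : ℝ → ℝ, u 0 = d ∧ (∀ t, 0 < u t) ∧ (∀ t, HasDerivAt u (v t) t) ∧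
      ∀ t, HasDerivAt v (a t * u t - u t ^ p) t := by
  have hA0 : 0 ≤ A := (abs_nonneg _).trans (hA 0)
  obtain ⟨R, hRA, hdR⟩ := (((tendsto_rpow_atTop (by linarith : 0 < p - 1)).eventually_ge_atTop
    ((p + 1) * A / 2)).and (eventually_ge_atTop d)).exists
  have hR : 0 < R := hd.trans_le hdR
  have hV : 0 ≤ (A + 1) * R := by positivity
  have hAV : A * R ^ 2 ≤ ((A + 1) * R) ^ 2 := by nlinarith [sq_nonneg R]
  obtain ⟨x, hx0, hx⟩ := exists_forall_hasDerivAt_of_lipschitzWith_of_norm_le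
    (lipschitzWith_truncField hp.le hR.le hA) (norm_truncField_le (by linarith) hR.le hV hA)
    (continuous_truncField_apply (continuous_iff_continuousAt.2 fun t => (ha t).continuousAt))
    (d, 0)
  have hE0 : truncEnergy a p R ((A + 1) * R) 0 (x 0) < 0 := by
    rw [hx0, truncEnergy, integral_same, integral_clip_of_mem le_rfl hR.le ⟨hd.le, hdR⟩,
      integral_clip_rpow_of_mem (by linarith) ⟨hd.le, hdR⟩]
    linarith
  have hmem t := mem_of_truncEnergy_neg hp hR hV (hA t) hRA hAV
    ((truncEnergy_le_truncEnergy_zero (by linarith) hR.le ha ha'_nonpos ha'_nonneg hx t).trans_lt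
      hE0)
  refine ⟨fun t => (x t).1, fun t => (x t).2, by simp [hx0], fun t => (hmem t).1.1,
    fun t => ?_, fun t => ?_⟩
  · have h := (hasFDerivAt_fst (𝕜 := ℝ)).comp_hasDerivAt t (hx t)
    rwa [ContinuousLinearMap.coe_fst', truncField, clip_of_mem (hmem t).2] at h
  · have h := (hasFDerivAt_snd (𝕜 := ℝ)).comp_hasDerivAt t (hx t)
    rwa [ContinuousLinearMap.coe_snd', truncField, clip_of_mem (Ioc_subset_Icc_self (hmem t).1)]
      at h

lemma contDiff_two_of_hasDerivAt {w w' w'' : ℝ → ℝ} (hw : ∀ t, HasDerivAt w (w' t) t)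
    (hw' : ∀ t, HasDerivAt w' (w'' t) t) (hw'' : Continuous w'') : ContDiff ℝ 2 w := by
  rw [show (2 : WithTop ℕ∞) = 1 + 1 from rfl, contDiff_succ_iff_deriv,
    funext fun t => (hw t).deriv, contDiff_one_iff_deriv, funext fun t => (hw' t).deriv]
  exact ⟨fun t => (hw t).differentiableAt, by simp, fun t => (hw' t).differentiableAt, hw''⟩

theorem infinite_setOf_pos_solutions (hp : 1 < p) (ha : ∀ t, HasDerivAt a (a' t) t)
    (ha'_nonpos : ∀ t ≤ 0, a' t ≤ 0) (ha'_nonneg : ∀ t, 0 ≤ t → 0 ≤ a' t)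
    (hA : ∀ t, |a t| ≤ A) (ha0 : 0 < a 0) :
    {w : ℝ → ℝ | ContDiff ℝ 2 w ∧ (∀ t, 0 < w t) ∧
      ∀ t, deriv (deriv w) t = a t * w t - w t ^ p}.Infinite := by
  have hB : 0 < (p + 1) * a 0 / 2 := div_pos (mul_pos (by linarith) ha0) two_pos
  refine ((Ioo_infinite (rpow_pos_of_pos hB (p - 1)⁻¹)).mono ?_).of_image (fun w => w 0)
  rintro d ⟨hd, hdD⟩
  have hdp : d ^ (p - 1) < (p + 1) * a 0 / 2 := by
    calc d ^ (p - 1) < (((p + 1) * a 0 / 2) ^ (p - 1)⁻¹) ^ (p - 1) :=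
          rpow_lt_rpow hd.le hdD (by linarith)
      _ = (p + 1) * a 0 / 2 := rpow_inv_rpow hB.le (by linarith)
  have hE : d ^ (p + 1) / (p + 1) < a 0 * d ^ 2 / 2 := by
    rw [div_lt_iff₀ (by linarith), show p + 1 = p - 1 + 2 by ring, rpow_add hd, rpow_two]
    nlinarith [pow_pos hd 2]
  obtain ⟨u, v, hu0, hu_pos, hu, hv⟩ := exists_pos_solution hp ha ha'_nonpos ha'_nonneg hA hd hE
  have hu_cont : Continuous u := continuous_iff_continuousAt.2 fun t => (hu t).continuousAt
  have ha_cont : Continuous a := continuous_iff_continuousAt.2 fun t => (ha t).continuousAt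
  refine ⟨u, ⟨contDiff_two_of_hasDerivAt hu hv ((ha_cont.mul hu_cont).sub
    (hu_cont.rpow_const fun _ => Or.inr (by linarith))), hu_pos, fun t => ?_⟩, hu0⟩
  rw [funext fun t => (hu t).deriv, (hv t).deriv]

end PositiveSolutions

section Bump

def bump (t : ℝ) : ℝ := exp (-2 * t) / (1 + exp (-2 * t)) ^ 2

def bumpDeriv (t : ℝ) : ℝ := 2 * exp (-2 * t) * (exp (-2 * t) - 1) / (1 + exp (-2 * t)) ^ 3

lemma hasDerivAt_bump (t : ℝ) : HasDerivAt bump (bumpDeriv t) t := by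
  have hE : HasDerivAt (fun t => exp (-2 * t)) (-2 * exp (-2 * t)) t := by
    simpa [mul_comm] using ((hasDerivAt_id t).const_mul (-2)).exp
  have h1 : 1 + exp (-2 * t) ≠ 0 := by positivity
  refine (hE.div ((hE.const_add 1).fun_pow 2) (pow_ne_zero 2 h1)).congr_deriv ?_
  rw [bumpDeriv]
  field_simp
  ring

lemma bump_pos (t : ℝ) : 0 < bump t := by unfold bump; positivity

lemma bump_le_quarter (t : ℝ) : bump t ≤ 1 / 4 := by
  rw [bump, div_le_iff₀ (by positivity)]
  nlinarith [sq_nonneg (1 - exp (-2 * t))]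

lemma bumpDeriv_nonneg {t : ℝ} (ht : t ≤ 0) : 0 ≤ bumpDeriv t := by
  have : 0 ≤ exp (-2 * t) - 1 := sub_nonneg.mpr (one_le_exp (by linarith))
  unfold bumpDeriv
  positivity

lemma bumpDeriv_nonpos {t : ℝ} (ht : 0 ≤ t) : bumpDeriv t ≤ 0 := by
  have : exp (-2 * t) - 1 ≤ 0 := sub_nonpos.mpr (exp_le_one_iff.mpr (by linarith))
  unfold bumpDeriv
  exact div_nonpos_of_nonpos_of_nonneg (mul_nonpos_of_nonneg_of_nonpos (by positivity) this)
    (by positivity)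

end Bump

theorem stmt15 (n : ℕ) (hn : 3 ≤ n) (β : ℝ)
    (hβ1 : ((n : ℝ) - 2) / 2 < β) (hβ2 : β < (n : ℝ) * ((n : ℝ) - 2) / 4) :
    {w : ℝ → ℝ |
      ContDiff ℝ 2 w ∧
      (∀ t : ℝ, 0 < w t) ∧
      (∀ t : ℝ,
        deriv (deriv w) t - (((n : ℝ) - 2) / 2) ^ 2 * w t
          + w t ^ (((n : ℝ) + 2) / ((n : ℝ) - 2))
          + ((n : ℝ) * ((n : ℝ) - 2) - 4 * β)
            * (Real.exp (-2 * t) / (1 + Real.exp (-2 * t)) ^ 2) * w t = 0)}.Infinite := by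
  have hn3 : (3 : ℝ) ≤ n := by exact_mod_cast hn
  set m := ((n : ℝ) - 2) / 2 with hm
  set c := (n : ℝ) * ((n : ℝ) - 2) - 4 * β with hc
  have hc0 : 0 < c := by linarith
  have hcm : c < 4 * m ^ 2 := by rw [hc, hm]; linarith
  have hp : 1 < ((n : ℝ) + 2) / ((n : ℝ) - 2) := by rw [one_lt_div (by linarith)]; linarith
  have hA t : |m ^ 2 - c * bump t| ≤ m ^ 2 := by
    rw [abs_le]
    constructor <;> nlinarith [bump_pos t, bump_le_quarter t]
  refine (infinite_setOf_pos_solutions hp (fun t => ((hasDerivAt_bump t).const_mul c).const_sub _)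
    (fun t ht => by nlinarith [bumpDeriv_nonneg ht]) (fun t ht => by nlinarith [bumpDeriv_nonpos ht])
    hA (by rw [bump, show (-2 : ℝ) * 0 = 0 by ring, exp_zero]; linarith)).mono ?_
  rintro w ⟨hw, hw_pos, hw_eq⟩
  refine ⟨hw, hw_pos, fun t => ?_⟩
  rw [hw_eq t, bump]
  ring
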